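/- Let 0 < P_fa < P_d < 1 and let D*(t) be the Bernoulli Kullback–Leibler divergence between P_fa + t(1−2P_fa) and P_d + t(1−2P_d). Consider a K-level tree with N_k ≥ 1 nodes at level k, and for an integer attack configuration B = (B_1,…,B_K) with 0 ≤ B_k ≤ N_k let t_k(B) = Σ_{j=1}^k B_j/N_j and D(B) = Σ_{k=1}^K N_k · D*(t_k(B)). If B' is obtained from B by adding one Byzantine at some level j (B'_j = B_j + 1, B'_i = B_i otherwise) and t_k(B') < 1/2 for all k, then D(B') < D(B); i.e., the total KLD is strictly decreasing in each B_k in the region where the attacker cannot blind the fusion center. -/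

import Mathlib

open Finset

/-- Bernoulli Kullback–Leibler divergence between success probabilities `a` and `b`. -/
noncomputable def klBern (a b : ℝ) : ℝ :=
  a * Real.log (a / b) + (1 - a) * Real.log ((1 - a) / (1 - b))

/-- Per-node level KL divergence under the optimal attack `(1,1)` as a function of the
covered fraction `t`. -/
noncomputable def Dstar (Pfa Pd t : ℝ) : ℝ :=
  klBern (Pfa + t * (1 - 2 * Pfa)) (Pd + t * (1 - 2 * Pd))

/-!
Write `π(t) = (π₀(t), π₁(t))`. For `s < t ≤ 1/2` the point `π(t)` is a
convex combination of `π(s)` and `(1/2, 1/2)`, where the divergence vanishes. The Bernoulli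
divergence is jointly convex (it is a sum of perspectives of `x log x`) and strictly positive off
the diagonal, so `D*(t) ≤ λ D*(s) < D*(s)` with `λ = (1 - 2t)/(1 - 2s) < 1`. One more Byzantine at
level `j` raises `t_k` by `1/N_j` for `k ≥ j` and leaves it unchanged for `k < j`, so every term
of `D(B)` weakly decreases and the term of level `j` strictly.
-/

open Real

theorem convexOn_mul_log_div :
    ConvexOn ℝ (Set.Ici 0 ×ˢ Set.Ioi 0) (fun p : ℝ × ℝ ↦ p.1 * log (p.1 / p.2)) := by
  refine ⟨(convex_Ici 0).prod (convex_Ioi 0), ?_⟩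
  rintro ⟨x₁, y₁⟩ ⟨hx₁, hy₁⟩ ⟨x₂, y₂⟩ ⟨hx₂, hy₂⟩ a b ha hb hab
  simp only [Set.mem_Ici, Set.mem_Ioi] at hx₁ hy₁ hx₂ hy₂
  simp only [Prod.smul_mk, Prod.mk_add_mk, smul_eq_mul]
  set y := a * y₁ + b * y₂
  set x := a * x₁ + b * x₂
  have hy : 0 < y := (convex_Ioi (0 : ℝ)) hy₁ hy₂ ha hb hab
  have hconv := convexOn_mul_log.2 (Set.mem_Ici.2 (div_nonneg hx₁ hy₁.le))
    (Set.mem_Ici.2 (div_nonneg hx₂ hy₂.le)) (by positivity : 0 ≤ a * y₁ / y)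
    (by positivity : 0 ≤ b * y₂ / y) (by rw [← add_div]; exact div_self hy.ne')
  have hmid : a * y₁ / y * (x₁ / y₁) + b * y₂ / y * (x₂ / y₂) = x / y := by
    field_simp; rfl
  simp only [smul_eq_mul, hmid] at hconv
  calc x * log (x / y) = y * (x / y * log (x / y)) := by field_simp
    _ ≤ y * (a * y₁ / y * (x₁ / y₁ * log (x₁ / y₁))
          + b * y₂ / y * (x₂ / y₂ * log (x₂ / y₂))) := by gcongr
    _ = a * (x₁ * log (x₁ / y₁)) + b * (x₂ * log (x₂ / y₂)) := by field_simp

theorem convexOn_klBern :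
    ConvexOn ℝ (Set.Icc 0 1 ×ˢ Set.Ioo 0 1) (fun p : ℝ × ℝ ↦ klBern p.1 p.2) := by
  have hconvex : Convex ℝ (Set.Icc (0 : ℝ) 1 ×ˢ Set.Ioo (0 : ℝ) 1) :=
    (convex_Icc 0 1).prod (convex_Ioo 0 1)
  have hs : Set.Icc (0 : ℝ) 1 ×ˢ Set.Ioo (0 : ℝ) 1 ⊆ Set.Ici 0 ×ˢ Set.Ioi 0 :=
    Set.prod_mono Set.Icc_subset_Ici_self Set.Ioo_subset_Ioi_self
  let reflect : ℝ × ℝ →ᵃ[ℝ] ℝ × ℝ := AffineMap.const ℝ (ℝ × ℝ) (1, 1) - AffineMap.id ℝ (ℝ × ℝ)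
  have hreflect :
      Set.Icc (0 : ℝ) 1 ×ˢ Set.Ioo (0 : ℝ) 1 ⊆ reflect ⁻¹' (Set.Ici 0 ×ˢ Set.Ioi 0) := by
    rintro ⟨a, b⟩ ⟨⟨-, ha⟩, ⟨-, hb⟩⟩
    simp [reflect, ha, hb]
  exact ((convexOn_mul_log_div.subset hs hconvex).add
    ((convexOn_mul_log_div.comp_affineMap reflect).subset hreflect hconvex))

theorem klBern_pos {a b : ℝ} (ha : a ∈ Set.Icc 0 1) (hb : b ∈ Set.Ioo 0 1) (hab : a ≠ b) :
    0 < klBern a b := by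
  obtain ⟨ha₀, ha₁⟩ := ha
  obtain ⟨hb₀, hb₁⟩ := hb
  have hb₁' : 0 < 1 - b := by linarith
  have hsplit : klBern a b = b * InformationTheory.klFun (a / b)
      + (1 - b) * InformationTheory.klFun ((1 - a) / (1 - b)) := by
    simp only [klBern, InformationTheory.klFun]
    field_simp
    ring
  have hfirst : 0 < InformationTheory.klFun (a / b) :=
    (InformationTheory.klFun_nonneg (by positivity)).lt_of_ne' fun h ↦
      hab ((div_eq_one_iff_eq hb₀.ne').1
        ((InformationTheory.klFun_eq_zero_iff (by positivity)).1 h))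
  have hsecond := InformationTheory.klFun_nonneg (div_nonneg (sub_nonneg.2 ha₁) hb₁'.le)
  rw [hsplit]
  positivity

theorem klBern_mix_half_lt {a b μ : ℝ} (ha : a ∈ Set.Icc 0 1) (hb : b ∈ Set.Ioo 0 1)
    (hab : a ≠ b) (hμ₀ : 0 ≤ μ) (hμ₁ : μ < 1) :
    klBern (μ * a + (1 - μ) / 2) (μ * b + (1 - μ) / 2) < klBern a b := by
  have hhalf : ((1 : ℝ) / 2, (1 : ℝ) / 2) ∈ Set.Icc (0 : ℝ) 1 ×ˢ Set.Ioo (0 : ℝ) 1 := by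
    norm_num
  have hle := convexOn_klBern.2 (Set.mk_mem_prod ha hb) hhalf hμ₀ (sub_nonneg.2 hμ₁.le)
    (add_sub_cancel μ 1)
  have hzero : klBern (1 / 2) (1 / 2) = 0 := by simp [klBern]
  simp only [Prod.smul_mk, Prod.mk_add_mk, smul_eq_mul, hzero, mul_zero, add_zero] at hle
  calc klBern (μ * a + (1 - μ) / 2) (μ * b + (1 - μ) / 2)
      = klBern (μ * a + (1 - μ) * (1 / 2)) (μ * b + (1 - μ) * (1 / 2)) := by ring_nf
    _ ≤ μ * klBern a b := hle
    _ < klBern a b := mul_lt_of_lt_one_left (klBern_pos ha hb hab) hμ₁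

theorem Dstar_strictAntiOn {Pfa Pd : ℝ} (hPfa : Pfa ∈ Set.Icc 0 1) (hPd : Pd ∈ Set.Ioo 0 1)
    (hne : Pfa ≠ Pd) : StrictAntiOn (Dstar Pfa Pd) (Set.Icc 0 (1 / 2)) := by
  rintro s ⟨hs₀, -⟩ t ⟨-, ht₁⟩ hst
  obtain ⟨hPfa₀, hPfa₁⟩ := hPfa
  obtain ⟨hPd₀, hPd₁⟩ := hPd
  have hs : 0 < 1 - 2 * s := by linarith
  have hmix : ∀ P : ℝ, P + t * (1 - 2 * P)
      = (1 - 2 * t) / (1 - 2 * s) * (P + s * (1 - 2 * P))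
        + (1 - (1 - 2 * t) / (1 - 2 * s)) / 2 := by
    intro P
    field_simp
    ring
  unfold Dstar
  rw [hmix Pfa, hmix Pd]
  refine klBern_mix_half_lt ⟨by nlinarith, by nlinarith⟩ ⟨by nlinarith, by nlinarith⟩ ?_
    (div_nonneg (by linarith) hs.le) ((div_lt_one hs).2 (by linarith))
  intro h
  exact hne (by nlinarith)

theorem sum_range_update_succ_div (B N : ℕ → ℕ) (j k : ℕ) :
    ∑ i ∈ range (k + 1), (Function.update B j (B j + 1) i : ℝ) / N i
      = ∑ i ∈ range (k + 1), (B i : ℝ) / N i + if j ≤ k then 1 / (N j : ℝ) else 0 := by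
  have hterm : ∀ i, (Function.update B j (B j + 1) i : ℝ) / N i
      = (B i : ℝ) / N i + if j = i then 1 / (N j : ℝ) else 0 := by
    intro i
    rcases eq_or_ne j i with rfl | hji
    · simp [add_div]
    · simp [Function.update_of_ne hji.symm, hji]
  simp only [hterm, sum_add_distrib, sum_ite_eq, mem_range, Nat.lt_succ_iff]

/-- Levels are indexed `0, …, K-1`. -/
theorem stmt_13_general (Pfa Pd : ℝ)
    (hPfa : 0 < Pfa) (hPfaPd : Pfa < Pd) (hPd : Pd < 1)
    (K : ℕ) (N : ℕ → ℕ) (hN : ∀ k < K, 1 ≤ N k)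
    (B : ℕ → ℕ)
    (j : ℕ) (hj : j < K)
    (B' : ℕ → ℕ) (hB'def : B' = Function.update B j (B j + 1))
    (hblind : ∀ k < K, ∑ i ∈ range (k + 1), (B' i : ℝ) / (N i : ℝ) < 1 / 2) :
    ∑ k ∈ range K, (N k : ℝ) *
        Dstar Pfa Pd (∑ i ∈ range (k + 1), (B' i : ℝ) / (N i : ℝ)) <
      ∑ k ∈ range K, (N k : ℝ) *
        Dstar Pfa Pd (∑ i ∈ range (k + 1), (B i : ℝ) / (N i : ℝ)) := by
  subst hB'def
  have hanti := Dstar_strictAntiOn ⟨hPfa.le, (hPfaPd.trans hPd).le⟩ ⟨hPfa.trans hPfaPd, hPd⟩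
    hPfaPd.ne
  have hlevel : ∀ k < K, j ≤ k → (N k : ℝ) *
      Dstar Pfa Pd (∑ i ∈ range (k + 1), (Function.update B j (B j + 1) i : ℝ) / N i) <
      N k * Dstar Pfa Pd (∑ i ∈ range (k + 1), (B i : ℝ) / N i) := by
    intro k hk hjk
    have hNk : (0 : ℝ) < N k := by exact_mod_cast hN k hk
    have hNj : (0 : ℝ) < N j := by exact_mod_cast hN j hj
    have hB₀ : (0 : ℝ) ≤ ∑ i ∈ range (k + 1), (B i : ℝ) / N i := by positivity
    have hstep : ∑ i ∈ range (k + 1), (B i : ℝ) / N i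
        < ∑ i ∈ range (k + 1), (Function.update B j (B j + 1) i : ℝ) / N i := by
      rw [sum_range_update_succ_div, if_pos hjk]
      exact lt_add_of_pos_right _ (by positivity)
    have hblind_k := hblind k hk
    exact mul_lt_mul_of_pos_left
      (hanti ⟨hB₀, by linarith⟩ ⟨hB₀.trans hstep.le, hblind_k.le⟩ hstep) hNk
  refine sum_lt_sum (fun k hk ↦ ?_) ⟨j, mem_range.2 hj, hlevel j hj le_rfl⟩
  rcases lt_or_ge k j with hkj | hjk
  · rw [sum_range_update_succ_div, if_neg hkj.not_ge, add_zero]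
  · exact (hlevel k (mem_range.1 hk) hjk).le

/-- In the region where the attacker cannot blind the fusion center, the total KL
divergence `D(B) = ∑ₖ Nₖ · D*(∑_{j≤k} Bⱼ/Nⱼ)` strictly decreases when one more
Byzantine is added at any level `j`.  (Levels are indexed `0,…,K-1`.) -/
theorem stmt_13 (Pfa Pd : ℝ)
    (hPfa : 0 < Pfa) (hPfaPd : Pfa < Pd) (hPd : Pd < 1)
    (K : ℕ) (N : ℕ → ℕ) (hN : ∀ k < K, 1 ≤ N k)
    (B : ℕ → ℕ) (hB : ∀ k < K, B k ≤ N k)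
    (j : ℕ) (hj : j < K)
    (B' : ℕ → ℕ) (hB'def : B' = Function.update B j (B j + 1))
    (hB' : ∀ k < K, B' k ≤ N k)
    (hblind : ∀ k < K, ∑ i ∈ range (k + 1), (B' i : ℝ) / (N i : ℝ) < 1 / 2) :
    ∑ k ∈ range K, (N k : ℝ) *
        Dstar Pfa Pd (∑ i ∈ range (k + 1), (B' i : ℝ) / (N i : ℝ)) <
      ∑ k ∈ range K, (N k : ℝ) *
        Dstar Pfa Pd (∑ i ∈ range (k + 1), (B i : ℝ) / (N i : ℝ)) :=
  stmt_13_general Pfa Pd hPfa hPfaPd hPd K N hN B j hj B' hB'def hblind
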